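/- Define δ₂ as above and δ₃(u,c,p,m) := -c^{2m-1}u² - 2(c^{2m-1} - cp + c^{2m}p)u + ((2c + c² - 2c^{2m} - c^{2m+1})p - c^{2m-1}). Assume m ≥ 1, c ∈ (0,1), p ∈ [p_*(m), 1). Then δ₃(u,c,p,m) ≥ 0 for all u ∈ [-1, -c]. -/

import Mathlib

/-!
Since `δ₃` is a concave quadratic in `u`, it suffices to check the endpoints. With
`T = c^(2m-1)` one has `δ₃(-1) = c²p(1-T)` and `δ₃(-c) = pc(2-c)(1-T) - T(1-c)²`.
For the second, write `T = c·c^a` with `a = 2m-2`. From `-log c ≥ 2(1-c)/(1+c)` and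
`exp ≥` its cubic Taylor polynomial `e₃` we get `T·D ≤ c` for `D = e₃(2a(1-c)/(1+c))`.
The threshold `p_*(m)` is exactly what gives `(a²+4a+2)p ≥ 1`, and
`(a²+4a+2)(1-c)² ≤ (2-c)(D-c)` is a polynomial inequality; together they give
`T(1-c)² ≤ Tp(2-c)(D-c)`, so `δ₃(-c) ≥ p(2-c)(c - T·D) ≥ 0`.
-/

open Real

namespace Real

theorem two_mul_one_sub_div_one_add_le_neg_log {c : ℝ} (hc0 : 0 < c) (hc1 : c ≤ 1) :
    2 * (1 - c) / (1 + c) ≤ -log c := by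
  have hx : |(1 - c) / (1 + c)| < 1 := by
    rw [abs_lt, lt_div_iff₀ (by linarith), div_lt_iff₀ (by linarith)]
    constructor <;> linarith
  have hlog : log (1 + (1 - c) / (1 + c)) - log (1 - (1 - c) / (1 + c)) = -log c := by
    have h1c : 1 + c ≠ 0 := by positivity
    rw [show 1 + (1 - c) / (1 + c) = 2 / (1 + c) by field_simp; ring,
      show 1 - (1 - c) / (1 + c) = 2 * c / (1 + c) by field_simp; ring,
      log_div two_ne_zero h1c, log_div (by positivity) h1c, log_mul two_ne_zero hc0.ne']
    ring
  have hsum := hasSum_log_sub_log_of_abs_lt_one hx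
  rw [hlog] at hsum
  simpa [mul_div_assoc] using le_hasSum hsum 0 fun k _ => by positivity

end Real

noncomputable def expTaylor3 (x : ℝ) : ℝ := 1 + x + x ^ 2 / 2 + x ^ 3 / 6

theorem expTaylor3_le_exp {x : ℝ} (hx : 0 ≤ x) : expTaylor3 x ≤ exp x := by
  have h := sum_le_exp_of_nonneg hx 4
  simp only [Finset.sum_range_succ, Finset.sum_range_zero, Nat.factorial] at h
  unfold expTaylor3
  norm_num at h
  linarith

theorem expTaylor3_le_expTaylor3 {x y : ℝ} (hx : 0 ≤ x) (hxy : x ≤ y) :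
    expTaylor3 x ≤ expTaylor3 y := by
  unfold expTaylor3
  gcongr

theorem rpow_mul_expTaylor3_le_one {c a : ℝ} (hc0 : 0 < c) (hc1 : c ≤ 1) (ha : 0 ≤ a) :
    c ^ a * expTaylor3 (2 * a * (1 - c) / (1 + c)) ≤ 1 := by
  have hX : 0 ≤ 2 * a * (1 - c) / (1 + c) := by
    have : 0 ≤ 1 - c := by linarith
    positivity
  have hXL : 2 * a * (1 - c) / (1 + c) ≤ a * -log c := by
    rw [show 2 * a * (1 - c) / (1 + c) = a * (2 * (1 - c) / (1 + c)) by ring]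
    exact mul_le_mul_of_nonneg_left (two_mul_one_sub_div_one_add_le_neg_log hc0 hc1) ha
  calc c ^ a * expTaylor3 (2 * a * (1 - c) / (1 + c))
      ≤ c ^ a * exp (a * -log c) := by
        gcongr
        exact (expTaylor3_le_expTaylor3 hX hXL).trans (expTaylor3_le_exp (hX.trans hXL))
    _ = 1 := by rw [rpow_def_of_pos hc0, ← exp_add]; ring_nf; exact exp_zero

theorem sq_mul_le_expTaylor3_sub {c a : ℝ} (hc0 : 0 ≤ c) (hc1 : c ≤ 1) (ha : 0 ≤ a) :
    (a ^ 2 + 4 * a + 2) * (1 - c) ^ 2 ≤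
      (2 - c) * (expTaylor3 (2 * a * (1 - c) / (1 + c)) - c) := by
  set X := 2 * a * (1 - c) / (1 + c) with hX
  have h1c : 0 ≤ 1 - c := by linarith
  have hX0 : 0 ≤ X := by positivity
  have haX : 2 * a * (1 - c) = X * (1 + c) := by rw [hX]; field_simp
  -- Eliminating `a` through `haX` leaves this cubic in `X`.
  have cubic : 0 ≤ 12 * c * (1 - c) + 12 * c * (2 * c - 1) * X
      + 3 * (3 - 4 * c - c ^ 2) * X ^ 2 + 2 * (2 - c) * X ^ 3 := by
    nlinarith [mul_nonneg (mul_nonneg hc0 h1c) (sq_nonneg (1 - X)),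
      mul_nonneg hX0 (mul_nonneg (sq_nonneg (1 - c)) hX0),
      mul_nonneg hX0 (sq_nonneg (X - 3 * c / 2)),
      mul_nonneg (mul_nonneg hX0 hc0) (by linarith : (0 : ℝ) ≤ 12 - 9 * c / 2),
      mul_nonneg (mul_nonneg hX0 h1c) (sq_nonneg X)]
  unfold expTaylor3
  linear_combination cubic / 12 + (a * (1 - c) / 2 + X * (1 + c) / 4 + 2 * (1 - c)) * haX

theorem rpow_mul_one_sub_sq_le {c s p : ℝ} (hc0 : 0 < c) (hc1 : c ≤ 1) (hs : 1 ≤ s)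
    (hp : 1 ≤ (s ^ 2 + 2 * s - 1) * p) :
    c ^ s * (1 - c) ^ 2 ≤ p * c * (2 - c) * (1 - c ^ s) := by
  set D := expTaylor3 (2 * (s - 1) * (1 - c) / (1 + c))
  have hp0 : 0 ≤ p := by nlinarith
  have hTD : c ^ s * D ≤ c := by
    rw [← sub_add_cancel s 1, rpow_add_one hc0.ne', mul_right_comm]
    exact mul_le_of_le_one_left hc0.le (rpow_mul_expTaylor3_le_one hc0 hc1 (by linarith))
  have hcore : (1 - c) ^ 2 ≤ p * (2 - c) * (D - c) := by
    linear_combination mul_le_mul_of_nonneg_left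
      (sq_mul_le_expTaylor3_sub hc0.le hc1 (by linarith : 0 ≤ s - 1)) hp0
      + mul_le_mul_of_nonneg_right hp (sq_nonneg (1 - c))
  have h2c : 0 ≤ p * (2 - c) := mul_nonneg hp0 (by linarith)
  linear_combination mul_le_mul_of_nonneg_left hcore (rpow_nonneg hc0.le s)
    + mul_le_mul_of_nonneg_left hTD h2c

noncomputable def pStar (m : ℝ) : ℝ :=
  (2 * m + 1 - √(4 * (m - 1) * (m + 2) + 1)) / (4 * (2 * m - 1))

theorem one_le_mul_pStar {m : ℝ} (hm : 1 ≤ m) : 1 ≤ (4 * m ^ 2 - 2) * pStar m := by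
  set r := √(4 * (m - 1) * (m + 2) + 1)
  have hr0 : 0 ≤ r := sqrt_nonneg _
  have hr2 : r ^ 2 = 4 * (m - 1) * (m + 2) + 1 := sq_sqrt (by nlinarith)
  -- Squared, this reads `(2m-1)²r² + 16(m-1)² = (4m²-3)²`.
  have hr : (2 * m - 1) * r ≤ 4 * m ^ 2 - 3 := by
    nlinarith [mul_nonneg (by linarith : (0 : ℝ) ≤ 2 * m - 1) hr0, sq_nonneg (m - 1)]
  unfold pStar
  rw [← mul_div_assoc, le_div_iff₀ (by linarith)]
  nlinarith

theorem quadratic_nonneg_of_endpoints {α β γ l r x : ℝ} (hα : α ≤ 0) (hx : x ∈ Set.Icc l r)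
    (hl : 0 ≤ α * l ^ 2 + β * l + γ) (hr : 0 ≤ α * r ^ 2 + β * r + γ) :
    0 ≤ α * x ^ 2 + β * x + γ := by
  obtain ⟨hlx, hxr⟩ := hx
  rcases hlx.eq_or_lt with rfl | hlx
  · exact hl
  have hrl : 0 < r - l := sub_pos.2 (hlx.trans_le hxr)
  have hrx : 0 ≤ r - x := sub_nonneg.2 hxr
  have hxl : 0 ≤ x - l := sub_nonneg.2 hlx.le
  have hbump : 0 ≤ -α * (x - l) * (r - x) * (r - l) :=
    mul_nonneg (mul_nonneg (mul_nonneg (neg_nonneg.2 hα) hxl) hrx) hrl.le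
  refine nonneg_of_mul_nonneg_right ?_ hrl
  linear_combination mul_nonneg hrx hl + mul_nonneg hxl hr + hbump

theorem delta3_nonneg_general (u c p m : ℝ) (hu : u ∈ Set.Icc (-1 : ℝ) (-c))
    (hc : c ∈ Set.Ioo (0 : ℝ) 1) (hm : 1 ≤ m)
    (hp : (2 * m + 1 - Real.sqrt (4 * (m - 1) * (m + 2) + 1)) / (4 * (2 * m - 1)) ≤ p) :
    0 ≤ -c ^ (2 * m - 1) * u ^ 2
        - 2 * (c ^ (2 * m - 1) - c * p + c ^ (2 * m) * p) * u
        + ((2 * c + c ^ 2 - 2 * c ^ (2 * m) - c ^ (2 * m + 1)) * p - c ^ (2 * m - 1)) := by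
  obtain ⟨hc0, hc1⟩ := hc
  have hpK : 1 ≤ (4 * m ^ 2 - 2) * p :=
    (one_le_mul_pStar hm).trans (mul_le_mul_of_nonneg_left hp (by nlinarith))
  have hp0 : 0 ≤ p := by nlinarith [show 0 ≤ 4 * m ^ 2 - 2 by nlinarith]
  have h2m : c ^ (2 * m) = c ^ (2 * m - 1) * c := by
    rw [← rpow_add_one hc0.ne', sub_add_cancel]
  have h2m1 : c ^ (2 * m + 1) = c ^ (2 * m - 1) * c ^ 2 := by
    rw [show 2 * m + 1 = 2 * m - 1 + (2 : ℕ) by push_cast; ring, rpow_add_natCast hc0.ne']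
  have hT0 : 0 ≤ c ^ (2 * m - 1) := rpow_nonneg hc0.le _
  have hT1 : c ^ (2 * m - 1) ≤ 1 := rpow_le_one hc0.le hc1.le (by linarith)
  have hright := rpow_mul_one_sub_sq_le (p := p) hc0 hc1.le (by linarith : 1 ≤ 2 * m - 1)
    (by linear_combination hpK)
  rw [h2m, h2m1]
  set T := c ^ (2 * m - 1)
  have hleft : 0 ≤ c ^ 2 * p * (1 - T) := by have := sub_nonneg.2 hT1; positivity
  linear_combination quadratic_nonneg_of_endpoints (α := -T) (β := -2 * (T - c * p + T * c * p))
    (γ := (2 * c + c ^ 2 - 2 * (T * c) - T * c ^ 2) * p - T) (by linarith) hu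
    (by linear_combination hleft) (by linear_combination hright)

/-- `δ₃(u,c,p,m) ≥ 0` for `u ∈ [-1,-c]`, `c ∈ (0,1)`, `m ≥ 1`, `p ∈ [p_*(m), 1)`. -/
theorem delta3_nonneg (u c p m : ℝ) (hu : u ∈ Set.Icc (-1 : ℝ) (-c))
    (hc : c ∈ Set.Ioo (0 : ℝ) 1) (hm : 1 ≤ m)
    (hp : (2 * m + 1 - Real.sqrt (4 * (m - 1) * (m + 2) + 1)) / (4 * (2 * m - 1)) ≤ p)
    (hp1 : p < 1) :
    0 ≤ -c ^ (2 * m - 1) * u ^ 2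
        - 2 * (c ^ (2 * m - 1) - c * p + c ^ (2 * m) * p) * u
        + ((2 * c + c ^ 2 - 2 * c ^ (2 * m) - c ^ (2 * m + 1)) * p - c ^ (2 * m - 1)) :=
  delta3_nonneg_general u c p m hu hc hm hp
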